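/- arXiv:2310.09209 — 9 statements merged into one kernel-verified Lean document; each statement's English description precedes it below -/
import Mathlib

section
/- In the complete metric space C([0,1], ℝ) of continuous real-valued functions on the unit interval with the supremum metric, the set of all functions f for which there exists a point x ∈ [0,1] and a real number L such that f has derivative L at x within [0,1] (i.e., f is differentiable at some point of [0,1], one-sidedly at the endpoints) is a meagre subset. In particular, its complement — the set of nowhere differentiable continuous functions — is comeagre. -/
/-!
Banach's argument. A continuous function with a derivative within `[0,1]` at `x` is bounded, so
all its difference quotients at `x` are bounded by some `n : ℕ`. For fixed `n` the functions
admitting such a point form a closed set, by compactness of `[0,1]`, and its complement is dense: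
a polynomial close to a given function, plus a small sawtooth of high frequency, has at every
point a difference quotient larger than `n`.
-/

open Set Metric

lemma LipschitzWith.dist_eq_of_dist_eq {X : Type*} [PseudoMetricSpace X] {φ : ℝ → X}
    (hφ : LipschitzWith 1 φ) {a b t : ℝ} (hab : dist (φ a) (φ b) = b - a) (hat : a ≤ t)
    (htb : t ≤ b) : dist (φ a) (φ t) = t - a ∧ dist (φ t) (φ b) = b - t := by
  have hle_at : dist (φ a) (φ t) ≤ t - a := by
    simpa [Real.dist_eq, abs_of_nonpos (sub_nonpos.2 hat)] using hφ.dist_le_mul a t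
  have hle_tb : dist (φ t) (φ b) ≤ b - t := by
    simpa [Real.dist_eq, abs_of_nonpos (sub_nonpos.2 htb)] using hφ.dist_le_mul t b
  have := dist_triangle (φ a) (φ t) (φ b)
  constructor <;> linarith

lemma HasFDerivWithinAt.exists_norm_sub_le_mul {𝕜 E F : Type*} [NontriviallyNormedField 𝕜]
    [NormedAddCommGroup E] [NormedSpace 𝕜 E] [NormedAddCommGroup F] [NormedSpace 𝕜 F]
    {f : E → F} {f' : E →L[𝕜] F} {s : Set E} {x : E} (hf : HasFDerivWithinAt f f' s x)
    (hbdd : Bornology.IsBounded (f '' s)) :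
    ∃ C, ∀ y ∈ s, ‖f y - f x‖ ≤ C * ‖y - x‖ := by
  obtain ⟨C₀, hC₀⟩ := hf.isBigO_sub.bound
  obtain ⟨δ, hδ, hball⟩ := Metric.mem_nhdsWithin_iff.1 hC₀
  obtain ⟨B, hB⟩ := hbdd.exists_norm_le
  refine ⟨max C₀ ((B + ‖f x‖) / δ), fun y hy => ?_⟩
  rcases lt_or_ge ‖y - x‖ δ with hnear | hfar
  · calc ‖f y - f x‖ ≤ C₀ * ‖y - x‖ := hball ⟨mem_ball_iff_norm.2 hnear, hy⟩
      _ ≤ _ := by gcongr; exact le_max_left _ _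
  · have hfy : ‖f y‖ ≤ B := hB _ (mem_image_of_mem f hy)
    calc ‖f y - f x‖ ≤ B + ‖f x‖ := (norm_sub_le _ _).trans (by gcongr)
      _ ≤ (B + ‖f x‖) / δ * ‖y - x‖ := by
        rw [div_mul_eq_mul_div, le_div_iff₀ hδ]
        gcongr
        exact (norm_nonneg _).trans hfy |>.trans (le_add_of_nonneg_right (norm_nonneg _))
      _ ≤ _ := by gcongr; exact le_max_right _ _

lemma Polynomial.exists_lipschitzWith_toContinuousMapOn (P : Polynomial ℝ) {s : Set ℝ}
    (hs : IsCompact s) : ∃ M, LipschitzWith M (P.toContinuousMapOn s) :=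
  have hP : ContDiff ℝ 1 fun x => P.eval x := by
    simpa only [Polynomial.coe_aeval_eq_eval] using P.contDiff_aeval (𝕜 := ℝ) 1
  let ⟨M, hM⟩ := hP.locallyLipschitz.locallyLipschitzOn.exists_lipschitzOnWith_of_compact hs
  ⟨M, hM.to_restrict⟩

noncomputable def sawtooth (t : ℝ) : ℝ := |t - round t|

lemma sawtooth_le_half (t : ℝ) : sawtooth t ≤ 1 / 2 := abs_sub_round t

lemma lipschitzWith_sawtooth : LipschitzWith 1 sawtooth :=
  LipschitzWith.of_le_add fun a b => calc
    sawtooth a ≤ |a - round b| := round_le a (round b)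
    _ ≤ |b - round b| + |a - b| := by
      rw [add_comm]; simpa using abs_sub_le a b (round b)
    _ = sawtooth b + dist a b := rfl

lemma sawtooth_intCast (n : ℤ) : sawtooth n = 0 := by
  simp [sawtooth]

lemma sawtooth_intCast_add_half (n : ℤ) : sawtooth (n + 1 / 2) = 1 / 2 := by
  have hround : round ((n : ℝ) + 1 / 2) = n + 1 := by
    rw [round_eq, add_assoc, add_halves, ← Int.cast_one, ← Int.cast_add, Int.floor_intCast]
  rw [sawtooth, hround]
  norm_num

lemma abs_sawtooth_sub_sawtooth_half (m : ℤ) :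
    |sawtooth ((m + 1) / 2) - sawtooth (m / 2)| = 1 / 2 := by
  obtain ⟨k, rfl | rfl⟩ := Int.even_or_odd' m
  · have hb : ((2 * k : ℤ) + 1 : ℝ) / 2 = k + 1 / 2 := by push_cast; ring
    have ha : ((2 * k : ℤ) : ℝ) / 2 = k := by push_cast; ring
    rw [hb, ha, sawtooth_intCast_add_half, sawtooth_intCast]
    norm_num
  · have hb : ((2 * k + 1 : ℤ) + 1 : ℝ) / 2 = (k + 1 : ℤ) := by push_cast; ring
    have ha : ((2 * k + 1 : ℤ) : ℝ) / 2 = k + 1 / 2 := by push_cast; ring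
    rw [hb, ha, sawtooth_intCast_add_half, sawtooth_intCast]
    norm_num

lemma exists_ne_abs_sawtooth_sub_eq {K : ℕ} (hK : 1 ≤ K) {t : ℝ} (ht : t ∈ Icc 0 (K : ℝ)) :
    ∃ u ∈ Icc 0 (K : ℝ), u ≠ t ∧ |sawtooth u - sawtooth t| = |u - t| := by
  -- `t` lies in a segment `[m / 2, (m + 1) / 2] ⊆ [0, K]`, on which `sawtooth` has slope `± 1`.
  set m : ℕ := min ⌊2 * t⌋₊ (2 * K - 1)
  have hm : (m : ℝ) ≤ 2 * t ∧ 2 * t ≤ m + 1 ∧ (m : ℝ) + 1 ≤ 2 * K := by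
    have hK' : ((2 * K - 1 : ℕ) : ℝ) = 2 * K - 1 := by
      rw [Nat.cast_sub (by omega)]; push_cast; ring
    have h2t : (⌊2 * t⌋₊ : ℝ) ≤ 2 * t := Nat.floor_le (by linarith [ht.1])
    rcases min_choice ⌊2 * t⌋₊ (2 * K - 1) with h | h <;> simp only [m, h]
    · have hle : (⌊2 * t⌋₊ : ℝ) ≤ 2 * K - 1 := by
        rw [← hK']; exact_mod_cast h ▸ min_le_right _ _
      exact ⟨h2t, (Nat.lt_floor_add_one _).le, by linarith⟩
    · have hle : (2 * K - 1 : ℝ) ≤ ⌊2 * t⌋₊ := by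
        rw [← hK']; exact_mod_cast h ▸ min_le_left _ _
      rw [hK']
      exact ⟨by linarith, by linarith [ht.2], by linarith⟩
  have hsaw : dist (sawtooth (m / 2)) (sawtooth ((m + 1) / 2)) = (m + 1) / 2 - m / 2 := by
    rw [Real.dist_eq, abs_sub_comm]
    simpa [add_div] using abs_sawtooth_sub_sawtooth_half m
  obtain ⟨hleft, hright⟩ :=
    lipschitzWith_sawtooth.dist_eq_of_dist_eq (t := t) hsaw (by linarith) (by linarith)
  rcases le_total (t - m / 2) ((m + 1) / 2 - t) with h | h
  · refine ⟨(m + 1) / 2, ⟨by positivity, by linarith⟩, by linarith, ?_⟩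
    rw [← Real.dist_eq, dist_comm, hright, abs_of_nonneg (by linarith)]
  · refine ⟨m / 2, ⟨by positivity, by linarith⟩, by linarith, ?_⟩
    rw [← Real.dist_eq, hleft, abs_of_nonpos (by linarith)]
    ring

noncomputable def sawtoothMap (K : ℕ) : C(Icc (0 : ℝ) 1, ℝ) :=
  ⟨fun y => sawtooth (K * y), lipschitzWith_sawtooth.continuous.comp (by fun_prop)⟩

lemma norm_sawtoothMap_le (K : ℕ) : ‖sawtoothMap K‖ ≤ 1 / 2 :=
  (ContinuousMap.norm_le _ (by norm_num)).2 fun _ =>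
    (abs_of_nonneg (abs_nonneg _)).trans_le (sawtooth_le_half _)

lemma exists_ne_dist_sawtoothMap_eq {K : ℕ} (hK : 1 ≤ K) (x : Icc (0 : ℝ) 1) :
    ∃ y, y ≠ x ∧ dist (sawtoothMap K y) (sawtoothMap K x) = K * dist y x := by
  have hK₀ : (0 : ℝ) < K := by exact_mod_cast hK
  obtain ⟨u, ⟨hu₀, huK⟩, hux, hu⟩ := exists_ne_abs_sawtooth_sub_eq hK
    (t := K * x) ⟨by have := x.2.1; positivity, by nlinarith [x.2.2]⟩
  refine ⟨⟨u / K, by positivity, (div_le_one hK₀).2 huK⟩, fun h => hux ?_, ?_⟩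
  · rw [← h]; field_simp
  · rw [Subtype.dist_eq, Real.dist_eq, Real.dist_eq]
    change |sawtooth (K * (u / K)) - sawtooth (K * x)| = _
    rw [mul_div_cancel₀ _ hK₀.ne', hu]
    change |u - K * x| = K * |u / K - x|
    rw [show u - K * x = K * (u / K - x) by field_simp, abs_mul, abs_of_pos hK₀]

section BoundedSlope

variable (X : Type*) [PseudoMetricSpace X]

def boundedSlopeAtSomePoint (C : ℝ) : Set C(X, ℝ) :=
  {f | ∃ x, ∀ y, dist (f y) (f x) ≤ C * dist y x}

lemma isClosed_boundedSlopeAtSomePoint [CompactSpace X] (C : ℝ) :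
    IsClosed (boundedSlopeAtSomePoint X C) := by
  have h : boundedSlopeAtSomePoint X C =
      Prod.fst '' ⋂ y, {p : C(X, ℝ) × X | dist (p.1 y) (p.1 p.2) ≤ C * dist y p.2} := by
    ext f; simp [boundedSlopeAtSomePoint]
  rw [h]
  exact isClosedMap_fst_of_compactSpace _
    (isClosed_iInter fun y => isClosed_le (by fun_prop) (by fun_prop))

end BoundedSlope

lemma add_smul_sawtoothMap_notMem {p : C(Icc (0 : ℝ) 1, ℝ)} {M : NNReal} (hp : LipschitzWith M p)
    {C c : ℝ} {K : ℕ} (hK : 1 ≤ K) (hcK : C + M < c * K) :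
    p + c • sawtoothMap K ∉ boundedSlopeAtSomePoint (Icc (0 : ℝ) 1) C := by
  rintro ⟨x, hx⟩
  obtain ⟨y, hyx, hy⟩ := exists_ne_dist_sawtoothMap_eq hK x
  have hdist : 0 < dist y x := dist_pos.2 hyx
  have hsteep : c * K * dist y x ≤ (C + M) * dist y x := calc
    c * K * dist y x ≤ |c| * (K * dist y x) := by
      rw [← mul_assoc]; gcongr; exact le_abs_self c
    _ = dist ((c • sawtoothMap K) y) ((c • sawtoothMap K) x) := by
      simp only [ContinuousMap.smul_apply, dist_smul₀, hy, Real.norm_eq_abs]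
    _ = dist ((p + c • sawtoothMap K) y - p y) ((p + c • sawtoothMap K) x - p x) := by
      simp
    _ ≤ C * dist y x + M * dist y x :=
      (dist_sub_sub_le _ _ _ _).trans (add_le_add (hx y) (hp.dist_le_mul y x))
    _ = (C + M) * dist y x := by ring
  exact (le_of_mul_le_mul_right hsteep hdist).not_gt hcK

lemma dense_compl_boundedSlopeAtSomePoint (C : ℝ) :
    Dense (boundedSlopeAtSomePoint (Icc (0 : ℝ) 1) C)ᶜ := by
  refine Metric.dense_iff.2 fun f ε hε => ?_
  obtain ⟨P, hP⟩ := exists_polynomial_near_continuousMap 0 1 f (ε / 2) (by positivity)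
  obtain ⟨M, hM⟩ := P.exists_lipschitzWith_toContinuousMapOn (isCompact_Icc (a := 0) (b := 1))
  obtain ⟨K, hK⟩ := exists_nat_gt (4 * (C + M) / ε)
  have hK' : 4 * (C + M) / ε < (K + 1 : ℕ) := hK.trans (by simp)
  refine ⟨P.toContinuousMapOn _ + (ε / 4) • sawtoothMap (K + 1), ?_,
    add_smul_sawtoothMap_notMem hM (by omega) ?_⟩
  · rw [mem_ball, dist_eq_norm]
    calc ‖P.toContinuousMapOn _ + (ε / 4) • sawtoothMap (K + 1) - f‖
        ≤ ‖(ε / 4) • sawtoothMap (K + 1)‖ + ‖P.toContinuousMapOn _ - f‖ := by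
          rw [add_sub_right_comm]; exact norm_add_le _ _ |>.trans_eq (add_comm _ _)
      _ < ε / 4 * (1 / 2) + ε / 2 := by
          rw [norm_smul, Real.norm_of_nonneg (by positivity)]
          exact add_lt_add_of_le_of_lt (by gcongr; exact norm_sawtoothMap_le _) hP
      _ < ε := by linarith
  · rw [div_lt_iff₀ hε] at hK'
    linarith

lemma exists_mem_boundedSlopeAtSomePoint_of_hasDerivWithinAt {a b : ℝ} (hab : a ≤ b)
    {f : C(Icc a b, ℝ)} {x L : ℝ} (hx : x ∈ Icc a b)
    (hf : HasDerivWithinAt (IccExtend hab f) L (Icc a b) x) :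
    ∃ n : ℕ, f ∈ boundedSlopeAtSomePoint (Icc a b) n := by
  have hbdd : Bornology.IsBounded (IccExtend hab f '' Icc a b) :=
    (isCompact_range f.continuous).isBounded.subset <| by
      rintro _ ⟨y, hy, rfl⟩
      exact ⟨⟨y, hy⟩, (IccExtend_of_mem hab f hy).symm⟩
  obtain ⟨C, hC⟩ := hf.hasFDerivWithinAt.exists_norm_sub_le_mul hbdd
  obtain ⟨n, hn⟩ := exists_nat_ge C
  refine ⟨n, ⟨x, hx⟩, fun y => ?_⟩
  have hy := hC y y.2
  rw [IccExtend_val, IccExtend_of_mem hab f hx] at hy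
  rw [dist_eq_norm, Subtype.dist_eq, dist_eq_norm]
  exact hy.trans (by gcongr)

/-- Baire category theorem on nowhere differentiable functions (Salzmann–Zeller):
in the space `C([0,1], ℝ)` with the supremum metric, the set of continuous
functions that are differentiable (one-sidedly at the endpoints) at at least one
point of `[0,1]` is meagre; in particular the nowhere differentiable functions
form a comeagre set. -/
theorem somewhere_differentiable_isMeagre :
    IsMeagre {f : C(Set.Icc (0 : ℝ) 1, ℝ) |
      ∃ x ∈ Set.Icc (0 : ℝ) 1, ∃ L : ℝ,
        HasDerivWithinAt (Set.IccExtend (by norm_num : (0 : ℝ) ≤ 1) f) L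
          (Set.Icc (0 : ℝ) 1) x} ∧
    {f : C(Set.Icc (0 : ℝ) 1, ℝ) |
      ∃ x ∈ Set.Icc (0 : ℝ) 1, ∃ L : ℝ,
        HasDerivWithinAt (Set.IccExtend (by norm_num : (0 : ℝ) ≤ 1) f) L
          (Set.Icc (0 : ℝ) 1) x}ᶜ ∈ residual C(Set.Icc (0 : ℝ) 1, ℝ) := by
  have hmeagre : IsMeagre (⋃ n : ℕ, boundedSlopeAtSomePoint (Icc (0 : ℝ) 1) n) :=
    isMeagre_iUnion fun n => IsNowhereDense.isMeagre <|
      (isClosed_boundedSlopeAtSomePoint _ n).isNowhereDense_iff.2 <|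
        interior_eq_empty_iff_dense_compl.2 (dense_compl_boundedSlopeAtSomePoint n)
  refine (fun h => ⟨h, h⟩) (hmeagre.mono ?_)
  rintro f ⟨x, hx, L, hf⟩
  exact mem_iUnion.2 (exists_mem_boundedSlopeAtSomePoint_of_hasDerivWithinAt _ hx hf)
end

section
/- Let t be a real number with t ≠ 1/2 and let a, x be nonzero quaternions. Then t•(a·x) + (1−t)•(x·a) ≠ 0. In other words, the mutation ℍ_t of the quaternions, with new multiplication a ∘_t x = t·a·x + (1−t)·x·a, has no zero divisors. -/
/-- The mutation `ℍ_t` of the quaternions (`t ≠ 1/2`), with multiplication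
`a ∘_t x = t·a·x + (1−t)·x·a`, has no zero divisors. -/
theorem quaternion_mutation_no_zero_divisors (t : ℝ) (ht : t ≠ 1 / 2)
    (a x : Quaternion ℝ) (ha : a ≠ 0) (hx : x ≠ 0) :
    t • (a * x) + (1 - t) • (x * a) ≠ 0 := by
  intro h
  have h1 : t • (a * x) = -((1 - t) • (x * a)) := eq_neg_of_add_eq_zero_left h
  have h2 := congrArg Quaternion.normSq h1
  have hsm : ∀ (r : ℝ) (q : Quaternion ℝ), Quaternion.normSq (r • q)
      = r ^ 2 * Quaternion.normSq q := by
    intro r q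
    rw [← Quaternion.coe_mul_eq_smul, map_mul, Quaternion.normSq_coe, sq]
  rw [Quaternion.normSq_neg, hsm, hsm, map_mul, map_mul] at h2
  have hna : 0 < Quaternion.normSq a := by exact lt_of_le_of_ne Quaternion.normSq_nonneg (Ne.symm (Quaternion.normSq_ne_zero.mpr (by assumption)))
  have hnx : 0 < Quaternion.normSq x := by exact lt_of_le_of_ne Quaternion.normSq_nonneg (Ne.symm (Quaternion.normSq_ne_zero.mpr (by assumption)))
  have : t ^ 2 = (1 - t) ^ 2 := by
    have := mul_pos hna hnx
    nlinarith [h2]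
  have : t = 1 / 2 := by nlinarith
  exact ht this
end

section
/- Let t be a real number with t ≠ 1/2 and let a be a nonzero quaternion. Then the map ℍ → ℍ given by x ↦ t•(a·x) + (1−t)•(x·a) is a bijection of the quaternions. Hence in the mutation ℍ_t, left multiplication by any nonzero element is invertible, so ℍ_t is a division algebra (semifield). -/
/-- In the mutation `ℍ_t` of the quaternions (`t ≠ 1/2`), left multiplication
`x ↦ a ∘_t x = t·a·x + (1−t)·x·a` by a nonzero element `a` is a bijection,
so `ℍ_t` is a division algebra (semifield). -/
theorem quaternion_mutation_left_mul_bijective (t : ℝ) (ht : t ≠ 1 / 2)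
    (a : Quaternion ℝ) (ha : a ≠ 0) :
    Function.Bijective (fun x : Quaternion ℝ => t • (a * x) + (1 - t) • (x * a)) := by
  set f : Quaternion ℝ →ₗ[ℝ] Quaternion ℝ :=
    t • (LinearMap.mulLeft ℝ a) + (1 - t) • (LinearMap.mulRight ℝ a) with hf
  have hfun : (fun x : Quaternion ℝ => t • (a * x) + (1 - t) • (x * a)) = f := by
    funext x
    simp [hf]
  have hinj : Function.Injective f := by
    rw [injective_iff_map_eq_zero]
    intro x hx
    by_contra hx0
    simp only [hf, LinearMap.add_apply, LinearMap.smul_apply, LinearMap.mulLeft_apply,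
      LinearMap.mulRight_apply] at hx
    have h1 : t • (a * x) = -((1 - t) • (x * a)) := by
      linear_combination (norm := module) hx
    have hn : ‖t • (a * x)‖ = ‖(1 - t) • (x * a)‖ := by rw [h1, norm_neg]
    rw [norm_smul, norm_smul, norm_mul, norm_mul] at hn
    have hax : ‖a‖ * ‖x‖ ≠ 0 := by
      simp [norm_ne_zero_iff.mpr ha, norm_ne_zero_iff.mpr hx0]
    have habs : |t| = |1 - t| := by
      have : ‖x‖ * ‖a‖ = ‖a‖ * ‖x‖ := mul_comm _ _
      rw [Real.norm_eq_abs, Real.norm_eq_abs, this] at hn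
      exact mul_right_cancel₀ hax hn
    rcases abs_eq_abs.mp habs with h | h
    · exact ht (by linarith)
    · linarith
  rw [hfun]
  exact ⟨hinj, LinearMap.injective_iff_surjective.mp hinj⟩
end

section
/- Fix a real number r. For a nonzero quaternion a let q(a) = cos(r·log‖a‖) + sin(r·log‖a‖)·i ∈ ℍ (the image in ℍ of the complex number ‖a‖^{ir}), and define the Kalscheuer multiplication by a ∘ x = a · q(a)⁻¹ · x · q(a) for a ≠ 0, and 0 ∘ x = 0. Then ∘ is associative: for all quaternions a, b, x one has a ∘ (b ∘ x) = (a ∘ b) ∘ x. -/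
open Quaternion
open scoped Classical

/-- The unit quaternion `‖a‖^{ir} = cos(r·log‖a‖) + sin(r·log‖a‖)·i`. -/
noncomputable def kalscheuerUnit (r : ℝ) (a : Quaternion ℝ) : Quaternion ℝ :=
  ⟨Real.cos (r * Real.log ‖a‖), Real.sin (r * Real.log ‖a‖), 0, 0⟩

/-- The Kalscheuer nearfield multiplication `a ∘ x = a · q(a)⁻¹ · x · q(a)`
(for `a ≠ 0`, and `0 ∘ x = 0`), where `q(a) = ‖a‖^{ir}`. -/
noncomputable def kalscheuerMul (r : ℝ) (a x : Quaternion ℝ) : Quaternion ℝ :=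
  if a = 0 then 0 else a * (kalscheuerUnit r a)⁻¹ * x * kalscheuerUnit r a

/-!
`kalscheuerUnit r a` is the image in `ℍ` of the unit complex number `‖a‖^{ir}`, so these units
commute with each other and are multiplicative in `‖a‖`. Since `‖a ∘ b‖ = ‖a‖ ‖b‖`, this gives
`q(a ∘ b) = q(a) q(b)`, and associativity becomes an identity between products twisted by
conjugation with commuting elements.
-/

theorem Commute.twisted_mul_assoc {G : Type*} [GroupWithZero G] {u v : G} (h : Commute u v)
    (a b x : G) :
    a * u⁻¹ * (b * v⁻¹ * x * v) * u = a * u⁻¹ * b * u * (u * v)⁻¹ * x * (u * v) := by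
  rcases eq_or_ne u 0 with rfl | hu
  · simp
  rw [h.eq, mul_inv_rev]
  simp only [mul_assoc, mul_inv_cancel_left₀ hu]

section Kalscheuer

variable (r : ℝ)

theorem kalscheuerUnit_eq_ofComplex (a : Quaternion ℝ) :
    kalscheuerUnit r a = ofComplex (Complex.exp ((r * Real.log ‖a‖ : ℝ) * Complex.I)) := by
  ext
  · exact (Complex.exp_ofReal_mul_I_re _).symm
  · exact (Complex.exp_ofReal_mul_I_im _).symm
  · rfl
  · rfl

theorem kalscheuerUnit_ne_zero (a : Quaternion ℝ) : kalscheuerUnit r a ≠ 0 := by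
  rw [kalscheuerUnit_eq_ofComplex]
  exact (map_ne_zero ofComplex).2 (Complex.exp_ne_zero _)

theorem kalscheuerUnit_commute (a b : Quaternion ℝ) :
    Commute (kalscheuerUnit r a) (kalscheuerUnit r b) := by
  rw [kalscheuerUnit_eq_ofComplex, kalscheuerUnit_eq_ofComplex]
  exact (Commute.all _ _).map ofComplex

theorem kalscheuerUnit_congr_norm {a b : Quaternion ℝ} (h : ‖a‖ = ‖b‖) :
    kalscheuerUnit r a = kalscheuerUnit r b := by
  rw [kalscheuerUnit, kalscheuerUnit, h]

theorem kalscheuerUnit_mul {a b : Quaternion ℝ} (ha : a ≠ 0) (hb : b ≠ 0) :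
    kalscheuerUnit r (a * b) = kalscheuerUnit r a * kalscheuerUnit r b := by
  simp only [kalscheuerUnit_eq_ofComplex, ← map_mul, ← Complex.exp_add, norm_mul,
    Real.log_mul (norm_ne_zero_iff.2 ha) (norm_ne_zero_iff.2 hb), mul_add, Complex.ofReal_add,
    add_mul]

theorem kalscheuerMul_of_ne_zero {a : Quaternion ℝ} (ha : a ≠ 0) (x : Quaternion ℝ) :
    kalscheuerMul r a x = a * (kalscheuerUnit r a)⁻¹ * x * kalscheuerUnit r a :=
  if_neg ha

theorem norm_kalscheuerMul (a x : Quaternion ℝ) : ‖kalscheuerMul r a x‖ = ‖a‖ * ‖x‖ := by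
  rcases eq_or_ne a 0 with rfl | ha
  · simp [kalscheuerMul]
  have hq : ‖kalscheuerUnit r a‖ ≠ 0 := norm_ne_zero_iff.2 (kalscheuerUnit_ne_zero r a)
  rw [kalscheuerMul_of_ne_zero r ha, norm_mul, norm_mul, norm_mul, norm_inv]
  field_simp

theorem kalscheuerMul_ne_zero {a b : Quaternion ℝ} (ha : a ≠ 0) (hb : b ≠ 0) :
    kalscheuerMul r a b ≠ 0 := by
  rw [← norm_ne_zero_iff, norm_kalscheuerMul]
  exact mul_ne_zero (norm_ne_zero_iff.2 ha) (norm_ne_zero_iff.2 hb)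

theorem kalscheuerUnit_kalscheuerMul {a b : Quaternion ℝ} (ha : a ≠ 0) (hb : b ≠ 0) :
    kalscheuerUnit r (kalscheuerMul r a b) = kalscheuerUnit r a * kalscheuerUnit r b := by
  rw [kalscheuerUnit_congr_norm r (b := a * b) (by rw [norm_kalscheuerMul, norm_mul]),
    kalscheuerUnit_mul r ha hb]

end Kalscheuer

/-- The multiplication of Kalscheuer's nearfield is associative. -/
theorem kalscheuerMul_assoc (r : ℝ) (a b x : Quaternion ℝ) :
    kalscheuerMul r a (kalscheuerMul r b x) = kalscheuerMul r (kalscheuerMul r a b) x := by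
  rcases eq_or_ne a 0 with rfl | ha
  · simp [kalscheuerMul]
  rcases eq_or_ne b 0 with rfl | hb
  · simp [kalscheuerMul, ha]
  rw [kalscheuerMul_of_ne_zero r (kalscheuerMul_ne_zero r ha hb),
    kalscheuerUnit_kalscheuerMul r ha hb, kalscheuerMul_of_ne_zero r ha,
    kalscheuerMul_of_ne_zero r hb, kalscheuerMul_of_ne_zero r ha]
  exact (kalscheuerUnit_commute r a b).twisted_mul_assoc a b x
end

section
/- Let θ be a real number with cos θ > 0 and let h = cos θ + sin θ·i ∈ ℍ (the image in ℍ of a unit complex number with positive real part). Then every quaternion a splits uniquely as a = r + p·h, where r is a real number (regarded as a real quaternion) and p is a pure quaternion: there exists exactly one pair (r, p) ∈ ℝ × ℍ with the real part of p equal to 0 and a = r + p·h. -/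
/-!
Since `re h ≠ 0`, `h` is invertible and `re (h⁻¹) = re h / ‖h‖² ≠ 0`. The equation
`a = r + p·h` forces `p = (a - r)·h⁻¹`, and `re ((a - r)·h⁻¹) = re (a·h⁻¹) - r·re (h⁻¹)`
vanishes for exactly one real `r`.
-/

open Quaternion

/-- The quaternion `h = cos θ + sin θ·i`, i.e. the image in `ℍ` of the complex
number `cos θ + sin θ·i`. -/
noncomputable def unitComplexQuat (θ : ℝ) : Quaternion ℝ :=
  ⟨Real.cos θ, Real.sin θ, 0, 0⟩

namespace Quaternion

variable {R : Type*}

theorem re_coe_mul [CommRing R] (r : R) (q : ℍ[R]) : ((r : ℍ[R]) * q).re = r * q.re := by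
  rw [coe_mul_eq_smul, re_smul, smul_eq_mul]

theorem re_inv [Field R] (h : ℍ[R]) : h⁻¹.re = (normSq h)⁻¹ * h.re := by
  rw [inv_def, re_smul, re_star, smul_eq_mul]

theorem existsUnique_add_mul_of_re_ne_zero [Field R] [LinearOrder R] [IsStrictOrderedRing R]
    {h : ℍ[R]} (hh : h.re ≠ 0) (a : ℍ[R]) :
    ∃! rp : R × ℍ[R], rp.2.re = 0 ∧ a = rp.1 + rp.2 * h := by
  have h_ne : h ≠ 0 := by
    rintro rfl
    exact hh rfl
  have hinv : h⁻¹.re ≠ 0 := by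
    rw [re_inv]
    exact mul_ne_zero (inv_ne_zero (normSq_ne_zero.2 h_ne)) hh
  have re_eq_zero_iff (r : R) : ((a - r) * h⁻¹).re = 0 ↔ r = (a * h⁻¹).re / h⁻¹.re := by
    rw [sub_mul, re_sub, re_coe_mul, sub_eq_zero, eq_div_iff hinv, eq_comm]
  refine ⟨((a * h⁻¹).re / h⁻¹.re, (a - _) * h⁻¹), ⟨(re_eq_zero_iff _).2 rfl, ?_⟩, ?_⟩
  · rw [inv_mul_cancel_right₀ h_ne, add_sub_cancel]
  · rintro ⟨r, p⟩ ⟨hp, ha⟩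
    have hp_eq : p = (a - r) * h⁻¹ := by
      rw [ha, add_sub_cancel_left, mul_inv_cancel_right₀ h_ne]
    obtain rfl := (re_eq_zero_iff r).1 (hp_eq ▸ hp)
    exact Prod.ext rfl hp_eq

end Quaternion

/-- Let `h = cos θ + sin θ·i` with `cos θ > 0`. Every quaternion `a` splits
uniquely as `a = r + p·h` with `r` real and `p` a pure quaternion. -/
theorem quaternion_unique_splitting (θ : ℝ) (hθ : 0 < Real.cos θ) (a : Quaternion ℝ) :
    ∃! rp : ℝ × Quaternion ℝ, rp.2.re = 0 ∧
      a = (rp.1 : Quaternion ℝ) + rp.2 * unitComplexQuat θ :=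
  existsUnique_add_mul_of_re_ne_zero (h := unitComplexQuat θ) hθ.ne' a
end

section
/- Let θ be a real number with 0 < θ < π/2 and let h = cos θ + sin θ·i ∈ ℍ. Let r ∈ ℝ and let p be a pure quaternion, not both zero, and let x be a nonzero quaternion. Then r•x + p·x·h ≠ 0. Consequently, the multiplication a ∘_h x = r(a)•x + p(a)·x·h, where a = r(a) + p(a)·h is the unique splitting of a into a real part and a pure quaternion times h, has no zero divisors. -/
/-!
Apply the map `y ↦ p·y·h` twice to `r•x = -p·x·h`: since a pure quaternion squares to
`-|p|²`, this gives `-|p|² x h² = r² x`, hence `|p|² h² = -r²` after cancelling `x`.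
If `h²` is not real, this forces `|p|² = 0` and then `r² = 0`. For `h = cos θ + sin θ·i`
the square is `cos 2θ + sin 2θ·i`, which is not real when `0 < θ < π/2`.
-/

open Quaternion

namespace Quaternion

variable {R : Type*} [Field R] [LinearOrder R] [IsStrictOrderedRing R]

theorem mul_self_eq_neg_normSq {p : ℍ[R]} (hp : p.re = 0) :
    p * p = -((normSq p : R) : ℍ[R]) := by
  rw [← self_mul_star, star_eq_neg.mpr hp, mul_neg, neg_neg]

theorem normSq_mul_mul_self_eq_neg_sq {r : R} {p x h : ℍ[R]} (hp : p.re = 0) (hx : x ≠ 0)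
    (H : r • x + p * x * h = 0) :
    ((normSq p : R) : ℍ[R]) * (h * h) = -((r ^ 2 : R) : ℍ[R]) := by
  have hpxh : p * x * h = -(r • x) := eq_neg_of_add_eq_zero_right H
  refine mul_left_cancel₀ hx ?_
  calc x * (((normSq p : R) : ℍ[R]) * (h * h))
      = -(p * (p * x * h) * h) := by
        rw [show p * (p * x * h) * h = p * p * x * (h * h) by simp only [mul_assoc],
          mul_self_eq_neg_normSq hp, neg_mul, neg_mul, neg_neg, ← mul_assoc, coe_commutes]
    _ = x * -((r ^ 2 : R) : ℍ[R]) := by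
        rw [hpxh, mul_neg, neg_mul, mul_smul_comm, smul_mul_assoc, hpxh, mul_neg,
          mul_coe_eq_smul, smul_neg, neg_neg, smul_smul, sq]

theorem eq_zero_of_smul_add_mul_mul_eq_zero {r : R} {p x h : ℍ[R]}
    (hh : ∀ c : R, h * h ≠ c) (hp : p.re = 0) (hx : x ≠ 0) (H : r • x + p * x * h = 0) :
    r = 0 ∧ p = 0 := by
  have hsq := normSq_mul_mul_self_eq_neg_sq hp hx H
  have hp0 : normSq p = 0 := by
    by_contra hn
    have hn' : ((normSq p : R) : ℍ[R]) ≠ 0 := by rwa [Ne, ← coe_zero, coe_inj]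
    refine hh ((normSq p)⁻¹ * -(r ^ 2)) ?_
    rw [coe_mul, coe_inv, coe_neg, ← hsq, inv_mul_cancel_left₀ hn']
  rw [hp0, coe_zero, zero_mul, zero_eq_neg, ← coe_zero, coe_inj, pow_eq_zero_iff two_ne_zero]
    at hsq
  exact ⟨hsq, normSq_eq_zero.mp hp0⟩

end Quaternion

theorem unitComplexQuat_mul_self_imI (θ : ℝ) :
    (unitComplexQuat θ * unitComplexQuat θ).imI = Real.sin (2 * θ) := by
  rw [imI_mul, Real.sin_two_mul]
  simp only [unitComplexQuat]
  ring

theorem unitComplexQuat_mul_self_ne_coe {θ : ℝ} (hθ : Real.sin (2 * θ) ≠ 0) (c : ℝ) :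
    unitComplexQuat θ * unitComplexQuat θ ≠ c := fun h => by
  simp [← unitComplexQuat_mul_self_imI, h] at hθ

/-- Let `h = cos θ + sin θ·i` with `0 < θ < π/2`, let `r` be a real number and
`p` a pure quaternion, not both zero, and let `x` be a nonzero quaternion.
Then `r•x + p·x·h ≠ 0`; hence Hähl's semifield multiplication
`a ∘_h x = r(a)•x + p(a)·x·h` has no zero divisors. -/
theorem haehl_semifield_no_zero_divisors (θ : ℝ) (hθ₀ : 0 < θ) (hθ₁ : θ < Real.pi / 2)
    (r : ℝ) (p : Quaternion ℝ) (hp : p.re = 0) (hrp : ¬(r = 0 ∧ p = 0))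
    (x : Quaternion ℝ) (hx : x ≠ 0) :
    r • x + p * x * unitComplexQuat θ ≠ 0 := by
  have hsin : Real.sin (2 * θ) ≠ 0 :=
    (Real.sin_pos_of_pos_of_lt_pi (by linarith) (by linarith)).ne'
  exact fun H => hrp (eq_zero_of_smul_add_mul_mul_eq_zero
    (unitComplexQuat_mul_self_ne_coe hsin) hp hx H)
end

section
/- In the plane ℝ², define the following family ℒ of 'lines': (1) vertical lines V_c = {(x,y) : x = c} for c ∈ ℝ; (2) Euclidean lines of nonnegative slope G_{m,b} = {(x,y) : y = m·x + b} for m ≥ 0 and b ∈ ℝ; (3) translated hyperbola branches H_{a,b} = {(x,y) : x > a and y = b + (x − a)⁻¹} for a, b ∈ ℝ. Then any two distinct points of ℝ² lie on exactly one member of ℒ. -/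
/-!
Lines of nonnegative slope are weakly increasing and hyperbola branches are strictly decreasing,
so two points with distinct abscissae lie on a line of only one of these kinds, chosen by the sign
of the secant slope, and two points with the same abscissa lie only on a vertical line.
For the hyperbola branches through `p` and `q` with `p.1 < q.1`, the offset `t = p.1 - a` has to
solve `t⁻¹ - (t + d)⁻¹ = p.2 - q.2` with `d = q.1 - p.1`; the left side equals
`d / (t * (t + d))`, which decreases strictly from `∞` to `0` for `t > 0`, so there is exactly
one such branch.
-/

/-- The lines of Salzmann's hyperbola plane: vertical lines, Euclidean lines of
nonnegative slope, and translates of the hyperbola branch `y = x⁻¹`, `x > 0`. -/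
def HyperbolaPlaneLines : Set (Set (ℝ × ℝ)) :=
  {L | (∃ c : ℝ, L = {p : ℝ × ℝ | p.1 = c}) ∨
       (∃ m b : ℝ, 0 ≤ m ∧ L = {p : ℝ × ℝ | p.2 = m * p.1 + b}) ∨
       (∃ a b : ℝ, L = {p : ℝ × ℝ | a < p.1 ∧ p.2 = b + (p.1 - a)⁻¹})}

open Set

namespace HyperbolaPlane

lemma inv_sub_inv_add_eq_div {t d : ℝ} (ht : t ≠ 0) (htd : t + d ≠ 0) :
    t⁻¹ - (t + d)⁻¹ = d / (t * (t + d)) := by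
  rw [inv_sub_inv ht htd, add_sub_cancel_left]

lemma strictAntiOn_inv_sub_inv_add {d : ℝ} (hd : 0 < d) :
    StrictAntiOn (fun t : ℝ => t⁻¹ - (t + d)⁻¹) (Ioi 0) := by
  intro s (hs : 0 < s) t (ht : 0 < t) hst
  have htd : t + d ≠ 0 := by positivity
  have hsd : s + d ≠ 0 := by positivity
  simp only [inv_sub_inv_add_eq_div ht.ne' htd, inv_sub_inv_add_eq_div hs.ne' hsd]
  exact div_lt_div_of_pos_left hd (by positivity) (by nlinarith)

lemma exists_pos_inv_sub_inv_add_eq {d k : ℝ} (hd : 0 < d) (hk : 0 < k) :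
    ∃ t, 0 < t ∧ t⁻¹ - (t + d)⁻¹ = k := by
  set s := √(k ^ 2 * d ^ 2 + 4 * k * d)
  have hs : s ^ 2 = k ^ 2 * d ^ 2 + 4 * k * d := Real.sq_sqrt (by positivity)
  have hkds : k * d < s := (Real.lt_sqrt (by positivity)).2 (by nlinarith)
  -- the positive root of `k * t * (t + d) = d`
  set t := (s - k * d) / (2 * k)
  have ht : 0 < t := div_pos (by linarith) (by positivity)
  have hroot : k * (t * (t + d)) = d := by
    simp only [t]
    field_simp
    linear_combination hs
  have htd : t + d ≠ 0 := by positivity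
  refine ⟨t, ht, ?_⟩
  rw [inv_sub_inv_add_eq_div ht.ne' htd, div_eq_iff (by positivity), hroot]

def verticalLine (c : ℝ) : Set (ℝ × ℝ) := {p | p.1 = c}

def graphLine (m b : ℝ) : Set (ℝ × ℝ) := {p | p.2 = m * p.1 + b}

def hyperbolaBranch (a b : ℝ) : Set (ℝ × ℝ) := {p | a < p.1 ∧ p.2 = b + (p.1 - a)⁻¹}

lemma mem_hyperbolaPlaneLines_iff {L : Set (ℝ × ℝ)} :
    L ∈ HyperbolaPlaneLines ↔ (∃ c, L = verticalLine c) ∨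
      (∃ m b, 0 ≤ m ∧ L = graphLine m b) ∨ ∃ a b, L = hyperbolaBranch a b :=
  Iff.rfl

variable {p q : ℝ × ℝ}

lemma eq_of_mem_graphLine_of_fst_eq {m b : ℝ} (hp : p ∈ graphLine m b)
    (hq : q ∈ graphLine m b) (hx : p.1 = q.1) : p = q :=
  Prod.ext hx (by rw [hp, hq, hx])

lemma eq_of_mem_hyperbolaBranch_of_fst_eq {a b : ℝ} (hp : p ∈ hyperbolaBranch a b)
    (hq : q ∈ hyperbolaBranch a b) (hx : p.1 = q.1) : p = q :=
  Prod.ext hx (by rw [hp.2, hq.2, hx])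

lemma snd_le_of_mem_graphLine {m b : ℝ} (hm : 0 ≤ m) (hp : p ∈ graphLine m b)
    (hq : q ∈ graphLine m b) (hx : p.1 ≤ q.1) : p.2 ≤ q.2 := by
  rw [hp, hq]
  gcongr

lemma snd_lt_of_mem_hyperbolaBranch {a b : ℝ} (hp : p ∈ hyperbolaBranch a b)
    (hq : q ∈ hyperbolaBranch a b) (hx : p.1 < q.1) : q.2 < p.2 := by
  rw [hp.2, hq.2]
  have := hp.1
  gcongr

lemma graphLine_eq_of_mem {m b m' b' : ℝ} (hx : p.1 ≠ q.1)
    (hp : p ∈ graphLine m b) (hq : q ∈ graphLine m b)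
    (hp' : p ∈ graphLine m' b') (hq' : q ∈ graphLine m' b') :
    graphLine m b = graphLine m' b' := by
  have hm : m = m' := by
    refine mul_right_cancel₀ (sub_ne_zero.2 hx.symm) ?_
    linear_combination hq'.out - hp'.out - hq.out + hp.out
  subst hm
  obtain rfl : b = b' := by linear_combination hp'.out - hp.out
  rfl

lemma hyperbolaBranch_eq_of_mem {a b a' b' : ℝ} (hx : p.1 < q.1)
    (hp : p ∈ hyperbolaBranch a b) (hq : q ∈ hyperbolaBranch a b)
    (hp' : p ∈ hyperbolaBranch a' b') (hq' : q ∈ hyperbolaBranch a' b') :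
    hyperbolaBranch a b = hyperbolaBranch a' b' := by
  have hoffset : p.1 - a = p.1 - a' := by
    refine (strictAntiOn_inv_sub_inv_add (sub_pos.2 hx)).injOn
      (sub_pos.2 hp.1) (sub_pos.2 hp'.1) ?_
    linear_combination hq.2 - hp.2 - hq'.2 + hp'.2
  obtain rfl : a = a' := by linarith
  obtain rfl : b = b' := by linear_combination hp'.2 - hp.2
  rfl

lemma exists_graphLine_mem (hx : p.1 < q.1) (hy : p.2 ≤ q.2) :
    ∃ m b, 0 ≤ m ∧ p ∈ graphLine m b ∧ q ∈ graphLine m b := by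
  have hd : q.1 - p.1 ≠ 0 := sub_ne_zero.2 hx.ne'
  refine ⟨(q.2 - p.2) / (q.1 - p.1), p.2 - (q.2 - p.2) / (q.1 - p.1) * p.1,
    div_nonneg (by linarith) (by linarith), by simp [graphLine], ?_⟩
  change q.2 = _ * q.1 + _
  field_simp
  ring

lemma exists_hyperbolaBranch_mem (hx : p.1 < q.1) (hy : q.2 < p.2) :
    ∃ a b, p ∈ hyperbolaBranch a b ∧ q ∈ hyperbolaBranch a b := by
  obtain ⟨t, ht, hdiff⟩ := exists_pos_inv_sub_inv_add_eq (sub_pos.2 hx) (sub_pos.2 hy)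
  refine ⟨p.1 - t, p.2 - t⁻¹, ⟨by linarith, by simp⟩, by linarith, ?_⟩
  linear_combination hdiff

lemma exists_mem_hyperbolaPlaneLines (p q : ℝ × ℝ) :
    ∃ L ∈ HyperbolaPlaneLines, p ∈ L ∧ q ∈ L := by
  wlog hx : p.1 ≤ q.1 generalizing p q
  · obtain ⟨L, hL, hq, hp⟩ := this q p (le_of_not_ge hx)
    exact ⟨L, hL, hp, hq⟩
  rcases hx.eq_or_lt with hx | hx
  · exact ⟨verticalLine p.1, .inl ⟨_, rfl⟩, rfl, hx.symm⟩
  rcases le_or_gt p.2 q.2 with hy | hy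
  · obtain ⟨m, b, hm, hp, hq⟩ := exists_graphLine_mem hx hy
    exact ⟨graphLine m b, .inr (.inl ⟨m, b, hm, rfl⟩), hp, hq⟩
  · obtain ⟨a, b, hp, hq⟩ := exists_hyperbolaBranch_mem hx hy
    exact ⟨hyperbolaBranch a b, .inr (.inr ⟨a, b, rfl⟩), hp, hq⟩

lemma eq_verticalLine_of_mem {L : Set (ℝ × ℝ)} (hL : L ∈ HyperbolaPlaneLines) (hpq : p ≠ q)
    (hx : p.1 = q.1) (hp : p ∈ L) (hq : q ∈ L) : L = verticalLine p.1 := by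
  rcases mem_hyperbolaPlaneLines_iff.1 hL with ⟨c, rfl⟩ | ⟨m, b, -, rfl⟩ | ⟨a, b, rfl⟩
  · rw [show p.1 = c from hp]
  · exact absurd (eq_of_mem_graphLine_of_fst_eq hp hq hx) hpq
  · exact absurd (eq_of_mem_hyperbolaBranch_of_fst_eq hp hq hx) hpq

lemma eq_of_mem_of_fst_lt {L L' : Set (ℝ × ℝ)} (hL : L ∈ HyperbolaPlaneLines)
    (hL' : L' ∈ HyperbolaPlaneLines) (hx : p.1 < q.1)
    (hp : p ∈ L) (hq : q ∈ L) (hp' : p ∈ L') (hq' : q ∈ L') : L = L' := by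
  rcases mem_hyperbolaPlaneLines_iff.1 hL with ⟨c, rfl⟩ | ⟨m, b, hm, rfl⟩ | ⟨a, b, rfl⟩
  · exact absurd (hp.trans hq.symm) hx.ne
  all_goals
    rcases mem_hyperbolaPlaneLines_iff.1 hL' with
      ⟨c', rfl⟩ | ⟨m', b', hm', rfl⟩ | ⟨a', b', rfl⟩
  · exact absurd (hp'.trans hq'.symm) hx.ne
  · exact graphLine_eq_of_mem hx.ne hp hq hp' hq'
  · exact absurd (snd_le_of_mem_graphLine hm hp hq hx.le)
      (not_le.2 (snd_lt_of_mem_hyperbolaBranch hp' hq' hx))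
  · exact absurd (hp'.trans hq'.symm) hx.ne
  · exact absurd (snd_le_of_mem_graphLine hm' hp' hq' hx.le)
      (not_le.2 (snd_lt_of_mem_hyperbolaBranch hp hq hx))
  · exact hyperbolaBranch_eq_of_mem hx hp hq hp' hq'

lemma eq_of_mem_hyperbolaPlaneLines {L L' : Set (ℝ × ℝ)} (hL : L ∈ HyperbolaPlaneLines)
    (hL' : L' ∈ HyperbolaPlaneLines) (hpq : p ≠ q)
    (hp : p ∈ L) (hq : q ∈ L) (hp' : p ∈ L') (hq' : q ∈ L') : L = L' := by
  wlog hx : p.1 ≤ q.1 generalizing p q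
  · exact this hpq.symm hq hp hq' hp' (le_of_not_ge hx)
  rcases hx.eq_or_lt with hx | hx
  · rw [eq_verticalLine_of_mem hL hpq hx hp hq, eq_verticalLine_of_mem hL' hpq hx hp' hq']
  · exact eq_of_mem_of_fst_lt hL hL' hx hp hq hp' hq'

end HyperbolaPlane

open HyperbolaPlane in
/-- In Salzmann's hyperbola plane, any two distinct points lie on exactly one line. -/
theorem hyperbolaPlane_exists_unique_line (p q : ℝ × ℝ) (hpq : p ≠ q) :
    ∃! L : Set (ℝ × ℝ), L ∈ HyperbolaPlaneLines ∧ p ∈ L ∧ q ∈ L := by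
  obtain ⟨L, hL, hp, hq⟩ := exists_mem_hyperbolaPlaneLines p q
  exact ⟨L, ⟨hL, hp, hq⟩, fun L' ⟨hL', hp', hq'⟩ =>
    eq_of_mem_hyperbolaPlaneLines hL' hL hpq hp' hq' hp hq⟩
end

section
/- Fix a real number k > 1. In the plane ℝ², define the family ℳ_k of Moulton lines: (1) vertical lines V_c = {(x,y) : x = c} for c ∈ ℝ; (2) lines of nonnegative slope G_{m,b} = {(x,y) : y = m·x + b} for m ≥ 0 and b ∈ ℝ; (3) for m < 0 and b ∈ ℝ, the bent lines B_{m,b} = {(x,y) : (x ≤ 0 and y = m·x + b) or (x ≥ 0 and y = k·m·x + b)}. Then any two distinct points of ℝ² lie on exactly one member of ℳ_k. -/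
/-!
Every non-vertical Moulton line is the graph of `x ↦ m * σₘ x + b`, where `σₘ` is the identity
for `m ≥ 0` and, for `m < 0`, the stretch `x ↦ x` (`x ≤ 0`), `x ↦ k * x` (`x > 0`), strictly
increasing as `k > 0`. Hence for `x₁ < x₂` the rise `m ↦ m * (σₘ x₂ - σₘ x₁)`, linear on each
side of `0`, negative for `m < 0` and nonnegative for `m ≥ 0`, is an increasing bijection of `ℝ`:
exactly one slope fits two points with distinct abscissae, and it forces `b`. Two points on a
common vertical lie on no graph, hence only on that vertical line.
-/

/-- The lines of the Moulton plane `M_k`: vertical lines, lines of nonnegative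
slope, and lines of negative slope `m` bent at the `y`-axis so that the slope
in the right half plane becomes `k·m`. -/
def MoultonLines (k : ℝ) : Set (Set (ℝ × ℝ)) :=
  {L | (∃ c : ℝ, L = {p : ℝ × ℝ | p.1 = c}) ∨
       (∃ m b : ℝ, 0 ≤ m ∧ L = {p : ℝ × ℝ | p.2 = m * p.1 + b}) ∨
       (∃ m b : ℝ, m < 0 ∧
         L = {p : ℝ × ℝ | (p.1 ≤ 0 ∧ p.2 = m * p.1 + b) ∨
                          (0 ≤ p.1 ∧ p.2 = k * m * p.1 + b)})}

noncomputable section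

namespace MoultonPlane

variable {k : ℝ}

def stretch (k x : ℝ) : ℝ := if x ≤ 0 then x else k * x

theorem stretch_strictMono (hk : 0 < k) : StrictMono (stretch k) := by
  intro x y hxy
  unfold stretch
  split_ifs <;> nlinarith

def lineFun (k m x : ℝ) : ℝ := if m < 0 then m * stretch k x else m * x

def graph (k m b : ℝ) : Set (ℝ × ℝ) := {p | p.2 = lineFun k m p.1 + b}

@[simp]
theorem mem_graph {m b : ℝ} {p : ℝ × ℝ} : p ∈ graph k m b ↔ p.2 = lineFun k m p.1 + b :=
  Iff.rfl

theorem bentLine_eq_graph {m : ℝ} (hm : m < 0) (b : ℝ) :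
    {p : ℝ × ℝ | (p.1 ≤ 0 ∧ p.2 = m * p.1 + b) ∨ (0 ≤ p.1 ∧ p.2 = k * m * p.1 + b)} =
      graph k m b := by
  ext ⟨x, y⟩
  simp only [graph, lineFun, stretch, if_pos hm, Set.mem_ofPred_eq]
  split_ifs with hx
  · constructor
    · rintro (⟨-, h⟩ | ⟨hx', h⟩)
      · exact h
      · obtain rfl : x = 0 := le_antisymm hx hx'
        simpa using h
    · exact fun h => Or.inl ⟨hx, h⟩
  · rw [show m * (k * x) = k * m * x by ring]
    exact ⟨fun h => (h.resolve_left fun h' => hx h'.1).2,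
      fun h => Or.inr ⟨(not_le.1 hx).le, h⟩⟩

theorem mem_moultonLines_iff {L : Set (ℝ × ℝ)} :
    L ∈ MoultonLines k ↔ (∃ c, L = {p | p.1 = c}) ∨ ∃ m b, L = graph k m b := by
  refine or_congr_right ⟨?_, ?_⟩
  · rintro (⟨m, b, hm, rfl⟩ | ⟨m, b, hm, rfl⟩)
    · exact ⟨m, b, by simp [graph, lineFun, not_lt.2 hm]⟩
    · exact ⟨m, b, bentLine_eq_graph hm b⟩
  · rintro ⟨m, b, rfl⟩
    rcases lt_or_ge m 0 with hm | hm
    · exact Or.inr ⟨m, b, hm, (bentLine_eq_graph hm b).symm⟩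
    · exact Or.inl ⟨m, b, hm, by simp [graph, lineFun, not_lt.2 hm]⟩

theorem lineFun_sub_strictMono (hk : 0 < k) {x₁ x₂ : ℝ} (hx : x₁ < x₂) :
    StrictMono fun m => lineFun k m x₂ - lineFun k m x₁ := by
  have hs := stretch_strictMono hk hx
  intro m m' hmm'
  simp only [lineFun]
  split_ifs <;> nlinarith

theorem lineFun_sub_surjective (hk : 0 < k) {x₁ x₂ : ℝ} (hx : x₁ < x₂) :
    Function.Surjective fun m => lineFun k m x₂ - lineFun k m x₁ := by
  intro t
  rcases lt_or_ge t 0 with ht | ht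
  · have hs := sub_pos.2 (stretch_strictMono hk hx)
    refine ⟨t / (stretch k x₂ - stretch k x₁), ?_⟩
    simp only [lineFun, if_pos (div_neg_of_neg_of_pos ht hs)]
    field_simp
  · have hs := sub_pos.2 hx
    refine ⟨t / (x₂ - x₁), ?_⟩
    simp only [lineFun, if_neg (div_nonneg ht hs.le).not_gt]
    field_simp

theorem existsUnique_lineFun_sub_eq (hk : 0 < k) {x₁ x₂ : ℝ} (hx : x₁ ≠ x₂) (t : ℝ) :
    ∃! m, lineFun k m x₂ - lineFun k m x₁ = t := by
  rcases hx.lt_or_gt with hx | hx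
  · exact Function.Bijective.existsUnique
      ⟨(lineFun_sub_strictMono hk hx).injective, lineFun_sub_surjective hk hx⟩ t
  · have := Function.Bijective.existsUnique
      ⟨(lineFun_sub_strictMono hk hx).injective, lineFun_sub_surjective hk hx⟩ (-t)
    simpa only [← neg_sub (lineFun k _ x₂), neg_inj] using this

theorem eq_of_mem_graph {m b : ℝ} {p q : ℝ × ℝ} (hx : p.1 = q.1) (hp : p ∈ graph k m b)
    (hq : q ∈ graph k m b) : p = q :=
  Prod.ext hx (by rw [hp, hq, hx])

end MoultonPlane

end

open MoultonPlane in
/-- In the Moulton plane `M_k` (`k > 1`), any two distinct points lie on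
exactly one line. -/
theorem moultonPlane_exists_unique_line (k : ℝ) (hk : 1 < k) (p q : ℝ × ℝ) (hpq : p ≠ q) :
    ∃! L : Set (ℝ × ℝ), L ∈ MoultonLines k ∧ p ∈ L ∧ q ∈ L := by
  simp_rw [mem_moultonLines_iff]
  rcases eq_or_ne p.1 q.1 with hx | hx
  · refine ⟨{r | r.1 = p.1}, ⟨Or.inl ⟨_, rfl⟩, rfl, hx.symm⟩, ?_⟩
    rintro L ⟨⟨c, rfl⟩ | ⟨m, b, rfl⟩, hp, hq⟩
    · rw [← show p.1 = c from hp]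
    · exact absurd (eq_of_mem_graph hx hp hq) hpq
  · obtain ⟨m, hm, hm_unique⟩ := existsUnique_lineFun_sub_eq (by linarith) hx (q.2 - p.2)
    refine ⟨graph k m (p.2 - lineFun k m p.1), ⟨Or.inr ⟨_, _, rfl⟩, ?_, ?_⟩, ?_⟩
    · simp
    · rw [mem_graph]; linarith
    · rintro L ⟨⟨c, rfl⟩ | ⟨m', b, rfl⟩, hp, hq⟩
      · exact absurd (hp.trans hq.symm) hx
      · rw [mem_graph] at hp hq
        obtain rfl : m' = m := hm_unique m' (by linarith)
        rw [show b = p.2 - lineFun k m' p.1 by linarith]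
end

section
/- There exists a field automorphism of the complex numbers that is not continuous: there is a ring isomorphism e : ℂ → ℂ such that e is not a continuous map with respect to the usual topology of ℂ. -/
/-!
A continuous ring endomorphism of `ℂ` is the identity or complex conjugation, so a continuous
automorphism of `ℂ` is an involution. On the other hand `ℂ` is the algebraic closure of the field
generated by a transcendence basis over `ℤ`, which is infinite because `ℂ` is uncountable, and any
permutation of that basis extends to an automorphism of `ℂ`. A permutation cycling three basis
elements therefore gives an automorphism that is not an involution.
-/

open Cardinal ComplexConjugate

theorem IsAlgClosed.equivOfTranscendenceBasis_apply {R K L ι κ : Type*} [CommRing R]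
    [Field K] [Algebra R K] [Field L] [Algebra R L] [IsAlgClosed K] [IsAlgClosed L]
    {v : ι → K} {w : κ → L} (e : ι ≃ κ) (hv : IsTranscendenceBasis R v)
    (hw : IsTranscendenceBasis R w) (i : ι) :
    equivOfTranscendenceBasis v w e hv hw (v i) = w (e i) := by
  let := isAlgClosure_of_transcendence_basis v hv
  let := isAlgClosure_of_transcendence_basis w hw
  have hvi : v i = algebraMap (Algebra.adjoin R (Set.range v)) K
      (hv.1.aevalEquiv (MvPolynomial.X i)) := by
    rw [hv.1.algebraMap_aevalEquiv, MvPolynomial.aeval_X]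
  rw [equivOfTranscendenceBasis, hvi, IsAlgClosure.equivOfEquiv_algebraMap]
  simp [hw.1.algebraMap_aevalEquiv]

theorem IsTranscendenceBasis.infinite_of_aleph0_lt {R K ι : Type*} [CommRing R] [Nontrivial R]
    [Field K] [Algebra R K] [IsAlgClosed K] {v : ι → K} (hv : IsTranscendenceBasis R v)
    (hR : #R ≤ ℵ₀) (hK : ℵ₀ < #K) : Infinite ι := by
  refine Cardinal.infinite_iff.mpr (aleph0_le_lift.mp ?_)
  rw [← IsAlgClosed.cardinal_eq_cardinal_transcendence_basis_of_aleph0_lt v hv hR hK]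
  exact aleph0_le_lift.mpr hK.le

theorem Equiv.Perm.exists_apply_apply_ne (α : Type*) [Infinite α] :
    ∃ (π : Equiv.Perm α) (a : α), π (π a) ≠ a := by
  classical
  let f := Infinite.natEmbedding α
  have hf : ∀ {m n : ℕ}, m ≠ n → f m ≠ f n := fun h => f.injective.ne h
  refine ⟨(Equiv.swap (f 0) (f 1)).trans (Equiv.swap (f 1) (f 2)), f 0, ?_⟩
  simp [Equiv.swap_apply_of_ne_of_ne, hf]

theorem Complex.ringEquiv_apply_apply_of_continuous {e : ℂ ≃+* ℂ} (he : Continuous e) (z : ℂ) :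
    e (e z) = z := by
  rcases ringHom_eq_id_or_conj_of_continuous (f := (e : ℂ →+* ℂ)) he with h | h
  · have h' : ∀ z, e z = z := RingHom.congr_fun h
    rw [h', h']
  · have h' : ∀ z, e z = conj z := RingHom.congr_fun h
    rw [h', h', conj_conj]

/-- There exists a discontinuous field automorphism of the complex numbers. -/
theorem exists_discontinuous_complex_automorphism :
    ∃ e : ℂ ≃+* ℂ, ¬ Continuous (⇑e) := by
  obtain ⟨s, hs⟩ := exists_isTranscendenceBasis ℤ ℂ
  have : Infinite s :=
    hs.infinite_of_aleph0_lt mk_int.le (mk_complex ▸ aleph0_lt_continuum)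
  obtain ⟨π, i, hπi⟩ := Equiv.Perm.exists_apply_apply_ne s
  refine ⟨IsAlgClosed.equivOfTranscendenceBasis _ _ π hs hs, fun hcont => hπi ?_⟩
  have := Complex.ringEquiv_apply_apply_of_continuous hcont i
  rw [IsAlgClosed.equivOfTranscendenceBasis_apply, IsAlgClosed.equivOfTranscendenceBasis_apply]
    at this
  exact Subtype.val_injective this
end
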